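/- Let R be a commutative local ring and let s = Σ_{i≥0} s_i x^i ∈ R[[x]]. Then the generalized matrix ring K_s(R[[x]]) is quasipolar if and only if K_{s₀}(R) is quasipolar, where s₀ is the constant term of s. -/

import Mathlib

/-- The generalized matrix ring `K_s(R)` with multiplier `s`. -/
@[ext]
structure GenMatrix (R : Type*) (s : R) where
  a : R
  b : R
  c : R
  d : R

namespace GenMatrix

variable {R : Type*} [Ring R] {s : R}

instance : Add (GenMatrix R s) :=
  ⟨fun X Y => ⟨X.a + Y.a, X.b + Y.b, X.c + Y.c, X.d + Y.d⟩⟩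
instance : Neg (GenMatrix R s) := ⟨fun X => ⟨-X.a, -X.b, -X.c, -X.d⟩⟩
instance : Zero (GenMatrix R s) := ⟨⟨0, 0, 0, 0⟩⟩
instance : One (GenMatrix R s) := ⟨⟨1, 0, 0, 1⟩⟩
instance : Mul (GenMatrix R s) :=
  ⟨fun X Y => ⟨X.a * Y.a + s * (X.b * Y.c), X.a * Y.b + X.b * Y.d,
    X.c * Y.a + X.d * Y.c, s * (X.c * Y.b) + X.d * Y.d⟩⟩

@[simp] lemma add_a (X Y : GenMatrix R s) : (X + Y).a = X.a + Y.a := rfl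
@[simp] lemma add_b (X Y : GenMatrix R s) : (X + Y).b = X.b + Y.b := rfl
@[simp] lemma add_c (X Y : GenMatrix R s) : (X + Y).c = X.c + Y.c := rfl
@[simp] lemma add_d (X Y : GenMatrix R s) : (X + Y).d = X.d + Y.d := rfl
@[simp] lemma neg_a (X : GenMatrix R s) : (-X).a = -X.a := rfl
@[simp] lemma neg_b (X : GenMatrix R s) : (-X).b = -X.b := rfl
@[simp] lemma neg_c (X : GenMatrix R s) : (-X).c = -X.c := rfl
@[simp] lemma neg_d (X : GenMatrix R s) : (-X).d = -X.d := rfl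
@[simp] lemma zero_a : (0 : GenMatrix R s).a = 0 := rfl
@[simp] lemma zero_b : (0 : GenMatrix R s).b = 0 := rfl
@[simp] lemma zero_c : (0 : GenMatrix R s).c = 0 := rfl
@[simp] lemma zero_d : (0 : GenMatrix R s).d = 0 := rfl
@[simp] lemma one_a : (1 : GenMatrix R s).a = 1 := rfl
@[simp] lemma one_b : (1 : GenMatrix R s).b = 0 := rfl
@[simp] lemma one_c : (1 : GenMatrix R s).c = 0 := rfl
@[simp] lemma one_d : (1 : GenMatrix R s).d = 1 := rfl
@[simp] lemma mul_a (X Y : GenMatrix R s) : (X * Y).a = X.a * Y.a + s * (X.b * Y.c) := rfl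
@[simp] lemma mul_b (X Y : GenMatrix R s) : (X * Y).b = X.a * Y.b + X.b * Y.d := rfl
@[simp] lemma mul_c (X Y : GenMatrix R s) : (X * Y).c = X.c * Y.a + X.d * Y.c := rfl
@[simp] lemma mul_d (X Y : GenMatrix R s) : (X * Y).d = s * (X.c * Y.b) + X.d * Y.d := rfl

instance : AddCommGroup (GenMatrix R s) where
  add_assoc X Y Z := by ext <;> simp [add_assoc]
  zero_add X := by ext <;> simp
  add_zero X := by ext <;> simp
  add_comm X Y := by ext <;> simp [add_comm]
  neg_add_cancel X := by ext <;> simp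
  nsmul := nsmulRec
  zsmul := zsmulRec

section Central

variable [Fact (s ∈ Set.center R)]

lemma scomm (r : R) : r * s = s * r := Semigroup.mem_center_iff.mp Fact.out r

lemma sshift (r t : R) : r * (s * t) = s * (r * t) := by
  rw [← mul_assoc, scomm (s := s), mul_assoc]

instance : Ring (GenMatrix R s) where
  __ := (inferInstance : AddCommGroup (GenMatrix R s))
  left_distrib X Y Z := by ext <;> simp [mul_add, add_mul] <;> abel
  right_distrib X Y Z := by ext <;> simp [mul_add, add_mul] <;> abel
  zero_mul X := by ext <;> simp
  mul_zero X := by ext <;> simp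
  mul_assoc X Y Z := by
    ext <;> simp only [mul_a, mul_b, mul_c, mul_d, mul_add, add_mul, mul_assoc, sshift] <;> abel
  one_mul X := by ext <;> simp
  mul_one X := by ext <;> simp

end Central

instance central_of_comm {R : Type*} [CommRing R] (s : R) : Fact (s ∈ Set.center R) :=
  ⟨by rw [Set.center_eq_univ]; trivial⟩

/-- `det_s` of a generalized matrix over a commutative ring. -/
def dets {R : Type*} {s : R} [CommRing R] (A : GenMatrix R s) : R :=
  A.a * A.d - s * (A.b * A.c)

/-- The trace of a generalized matrix. -/
def tr {R : Type*} {s : R} [Ring R] (A : GenMatrix R s) : R := A.a + A.d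

end GenMatrix

/-- An element `a` is quasinilpotent if `1 + a*x` is a unit for every `x` commuting with `a`. -/
def IsQuasinilpotent {R : Type*} [Ring R] (a : R) : Prop :=
  ∀ x : R, a * x = x * a → IsUnit (1 + a * x)

/-- An element `a` is quasipolar if there is an idempotent `p` in the double commutant of `a`
with `a + p` a unit and `a * p` quasinilpotent. -/
def IsQuasipolar {R : Type*} [Ring R] (a : R) : Prop :=
  ∃ p : R, IsIdempotentElem p ∧ (∀ y : R, y * a = a * y → p * y = y * p) ∧
    IsUnit (a + p) ∧ IsQuasinilpotent (a * p)

/-- A ring is quasipolar if every element is quasipolar. -/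
def IsQuasipolarRing (R : Type*) [Ring R] : Prop := ∀ a : R, IsQuasipolar a

/-- An element is strongly clean if it is the sum of an idempotent and a unit that commute. -/
def IsStronglyClean {R : Type*} [Ring R] (a : R) : Prop :=
  ∃ e u : R, IsIdempotentElem e ∧ IsUnit u ∧ a = e + u ∧ e * u = u * e

/-- A ring is strongly clean if every element is strongly clean. -/
def IsStronglyCleanRing (R : Type*) [Ring R] : Prop := ∀ a : R, IsStronglyClean a

/-- `a` is similar to `b` if `b = u⁻¹ * a * u` for some unit `u`. -/
def IsSimilar {R : Type*} [Ring R] (a b : R) : Prop :=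
  ∃ u : Rˣ, b = ↑u⁻¹ * a * ↑u

/-- The Jacobson radical of a ring: the intersection of all maximal left ideals. -/
def JacobsonRadical (R : Type*) [Ring R] : Ideal R := Ideal.jacobson ⊥
/-! Over a commutative local ring `R`, an element `A` of `K_s(R)` with `tr A` a unit and
`det_s A` a nonunit is quasipolar exactly when `x² - tr A · x + det_s A` has a root `α` in the
maximal ideal: such a root yields the quasipolar idempotent `(β - A) / (β - α)` with
`β = tr A - α`, and conversely a quasipolar idempotent `p` splits `A = A p + A (1 - p)` into two
summands of determinant zero, so that `tr (A p)` is a root. All other elements are quasipolar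
for trivial reasons (with `p = 0` or `p = 1`). At a nonunit root the derivative `2α - tr A` is a
unit, so Hensel's lemma in the `X`-adically complete ring `R⟦X⟧` lifts roots modulo `X`; hence
the root condition holds for `K_s(R⟦X⟧)` iff it holds for `K_{s₀}(R)`. -/

theorem IsLocalRing.isUnit_sub_of_not_isUnit {R : Type*} [CommRing R] [IsLocalRing R] {a b : R}
    (ha : IsUnit a) (hb : ¬IsUnit b) : IsUnit (a - b) := by
  rw [← IsLocalRing.notMem_maximalIdeal] at ha ⊢
  rw [← mem_nonunits_iff, ← IsLocalRing.mem_maximalIdeal] at hb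
  exact fun hab => ha (by simpa using add_mem hab hb)

theorem IsLocalRing.eq_zero_or_eq_one_of_isIdempotentElem {R : Type*} [CommRing R]
    [IsLocalRing R] {e : R} (he : IsIdempotentElem e) : e = 0 ∨ e = 1 := by
  rcases IsLocalRing.isUnit_or_isUnit_one_sub_self e with h | h
  · exact Or.inr ((IsIdempotentElem.iff_eq_one_of_isUnit h).mp he)
  · exact Or.inl (sub_eq_self.mp ((IsIdempotentElem.iff_eq_one_of_isUnit h).mp he.one_sub))

theorem IsQuasinilpotent.not_isUnit {R : Type*} [Ring R] [Nontrivial R] {a : R}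
    (ha : IsQuasinilpotent a) : ¬IsUnit a := by
  rintro ⟨u, rfl⟩
  have h := ha (-↑u⁻¹) (by simp)
  simp at h

theorem IsQuasinilpotent.isQuasipolar {R : Type*} [Ring R] {a : R} (ha : IsQuasinilpotent a) :
    IsQuasipolar a :=
  ⟨1, .one, fun y _ => by rw [one_mul, mul_one], by simpa [add_comm] using ha 1 (by simp),
    by rwa [mul_one]⟩

theorem IsUnit.isQuasipolar {R : Type*} [Ring R] {a : R} (ha : IsUnit a) : IsQuasipolar a :=
  ⟨0, .zero, fun y _ => by rw [zero_mul, mul_zero], by rwa [add_zero], fun x _ => by simp⟩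

open Polynomial in
theorem HenselianRing.exists_root_quadratic {S : Type*} [CommRing S] {I : Ideal S}
    [HenselianRing S I] {τ δ a₀ : S} (h₀ : a₀ * a₀ - τ * a₀ + δ ∈ I)
    (hu : IsUnit (2 * a₀ - τ)) : ∃ a : S, a * a - τ * a + δ = 0 ∧ a - a₀ ∈ I := by
  have hmonic : (X ^ 2 - C τ * X + C δ : S[X]).Monic := by monicity!
  have hderiv : (derivative (X ^ 2 - C τ * X + C δ)).eval a₀ = 2 * a₀ - τ := by
    simp; ring
  obtain ⟨a, hroot, ha⟩ := HenselianRing.is_henselian _ hmonic a₀ (by simpa [sq] using h₀)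
    (by rw [hderiv]; exact hu.map (Ideal.Quotient.mk I))
  exact ⟨a, by simpa [sq] using hroot, ha⟩

open PowerSeries in
theorem PowerSeries.exists_root_quadratic_of_constantCoeff {R : Type*} [CommRing R]
    {τ δ : PowerSeries R} {a₀ : R}
    (h₀ : a₀ * a₀ - constantCoeff τ * a₀ + constantCoeff δ = 0)
    (hu : IsUnit (2 * a₀ - constantCoeff τ)) :
    ∃ a : PowerSeries R, a * a - τ * a + δ = 0 ∧ constantCoeff a = a₀ := by
  obtain ⟨a, hroot, ha⟩ := HenselianRing.exists_root_quadratic (I := Ideal.span {X})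
    (a₀ := C a₀) (τ := τ) (δ := δ) (by simpa [Ideal.mem_span_singleton, X_dvd_iff] using h₀)
    (isUnit_iff_constantCoeff.mpr (by simpa [map_ofNat] using hu))
  refine ⟨a, hroot, ?_⟩
  simpa [Ideal.mem_span_singleton, X_dvd_iff, sub_eq_zero] using ha

namespace GenMatrix

section CommRing

variable {R : Type*} [CommRing R] {s : R}

instance [Nontrivial R] : Nontrivial (GenMatrix R s) :=
  ⟨⟨0, 1, fun h => zero_ne_one (congrArg GenMatrix.a h)⟩⟩

@[simp] lemma sub_a (X Y : GenMatrix R s) : (X - Y).a = X.a - Y.a := by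
  rw [sub_eq_add_neg, add_a, neg_a, ← sub_eq_add_neg]
@[simp] lemma sub_b (X Y : GenMatrix R s) : (X - Y).b = X.b - Y.b := by
  rw [sub_eq_add_neg, add_b, neg_b, ← sub_eq_add_neg]
@[simp] lemma sub_c (X Y : GenMatrix R s) : (X - Y).c = X.c - Y.c := by
  rw [sub_eq_add_neg, add_c, neg_c, ← sub_eq_add_neg]
@[simp] lemma sub_d (X Y : GenMatrix R s) : (X - Y).d = X.d - Y.d := by
  rw [sub_eq_add_neg, add_d, neg_d, ← sub_eq_add_neg]

def scalar : R →+* GenMatrix R s where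
  toFun r := ⟨r, 0, 0, r⟩
  map_one' := rfl
  map_mul' r r' := by ext <;> simp
  map_zero' := rfl
  map_add' r r' := by ext <;> simp

@[simp] lemma scalar_a (r : R) : (scalar r : GenMatrix R s).a = r := rfl
@[simp] lemma scalar_b (r : R) : (scalar r : GenMatrix R s).b = 0 := rfl
@[simp] lemma scalar_c (r : R) : (scalar r : GenMatrix R s).c = 0 := rfl
@[simp] lemma scalar_d (r : R) : (scalar r : GenMatrix R s).d = r := rfl

lemma scalar_mul_comm (r : R) (M : GenMatrix R s) : scalar r * M = M * scalar r := by
  ext <;> simp [mul_comm]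

def map {S : Type*} [CommRing S] (f : R →+* S) {t : S} (A : GenMatrix R s) : GenMatrix S t :=
  ⟨f A.a, f A.b, f A.c, f A.d⟩

lemma tr_sub (X Y : GenMatrix R s) : tr (X - Y) = tr X - tr Y := by
  simp only [tr, sub_a, sub_d]; ring

lemma tr_scalar_mul (r : R) (M : GenMatrix R s) : tr (scalar r * M) = r * tr M := by
  simp [tr]; ring

lemma tr_map {S : Type*} [CommRing S] (f : R →+* S) {t : S} (A : GenMatrix R s) :
    tr (map f A : GenMatrix S t) = f (tr A) := by
  simp [map, tr]

lemma dets_mul (X Y : GenMatrix R s) : dets (X * Y) = dets X * dets Y := by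
  simp [dets]; ring

@[simp] lemma dets_scalar (r : R) : dets (scalar r : GenMatrix R s) = r * r := by
  simp [dets]

lemma dets_add (X Y : GenMatrix R s) :
    dets (X + Y) = dets X + dets Y + (tr X * tr Y - tr (X * Y)) := by
  simp [dets, tr]; ring

lemma dets_one_add (M : GenMatrix R s) : dets (1 + M) = 1 + tr M + dets M := by
  simp [dets, tr]; ring

lemma dets_one_sub (M : GenMatrix R s) : dets (1 - M) = 1 - tr M + dets M := by
  simp [dets, tr]; ring

lemma dets_map {S : Type*} [CommRing S] (f : R →+* S) (A : GenMatrix R s) :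
    dets (map f A : GenMatrix S (f s)) = f (dets A) := by
  simp [map, dets]

lemma tr_mul_self (M : GenMatrix R s) : tr M * tr M = tr (M * M) + 2 * dets M := by
  simp [tr, dets]; ring

lemma tr_mul_self_mul (A Y : GenMatrix R s) :
    tr (A * A * Y) = tr A * tr (A * Y) - dets A * tr Y := by
  simp [tr, dets]; ring

-- The `s`-adjugate `⟨d, -b, -c, a⟩` is an inverse of `A` up to the factor `dets A`.
lemma isUnit_iff_isUnit_dets {A : GenMatrix R s} : IsUnit A ↔ IsUnit (dets A) := by
  refine ⟨fun h => ?_, fun h => ?_⟩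
  · obtain ⟨B, hB⟩ := h.exists_right_inv
    exact IsUnit.of_mul_eq_one (dets B) (by rw [← dets_mul, hB]; simp [dets])
  · obtain ⟨e, he⟩ := h.exists_right_inv
    refine isUnit_iff_exists.mpr ⟨⟨e * A.d, -(e * A.b), -(e * A.c), e * A.a⟩, ?_, ?_⟩ <;>
      ext <;> simp [dets] at he ⊢ <;> first | ring1 | linear_combination he

def HasNonunitCharRoots (R : Type*) [CommRing R] (s : R) : Prop :=
  ∀ A : GenMatrix R s, IsUnit (tr A) → ¬IsUnit (dets A) →
    ∃ α : R, ¬IsUnit α ∧ α * α - tr A * α + dets A = 0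

end CommRing

section IsLocalRing

variable {R : Type*} [CommRing R] [IsLocalRing R] {s : R}

open IsLocalRing

lemma isQuasinilpotent_iff {A : GenMatrix R s} :
    IsQuasinilpotent A ↔ ¬IsUnit (tr A) ∧ ¬IsUnit (dets A) := by
  refine ⟨fun h => ⟨fun ht => ?_, fun hd => ?_⟩, fun ⟨ht, hd⟩ => ?_⟩
  · obtain ⟨e, he⟩ := ht.exists_right_inv
    -- with `X = -(tr A)⁻¹`, `dets (1 + A X) = 1 - e tr A + e² dets A = e² dets A`
    have hunit := isUnit_iff_isUnit_dets.mp (h (scalar (-e)) (scalar_mul_comm _ _).symm)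
    rw [← scalar_mul_comm, dets_one_add, tr_scalar_mul, dets_mul, dets_scalar,
      show 1 + -e * tr A + -e * -e * dets A = e * e * dets A by linear_combination -he] at hunit
    exact IsQuasinilpotent.not_isUnit h
      (isUnit_iff_isUnit_dets.mpr (isUnit_of_mul_isUnit_right hunit))
  · exact IsQuasinilpotent.not_isUnit h (isUnit_iff_isUnit_dets.mpr hd)
  · intro X hAX
    rw [← mem_nonunits_iff, ← mem_maximalIdeal] at ht hd
    -- `tr (A X)² = tr (A² X²) + 2 dets (A X)`, and Cayley–Hamilton puts `tr (A² X²)` in `𝔪`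
    have htr : tr (A * X) ∈ maximalIdeal R := by
      refine (maximalIdeal.isMaximal R).isPrime.mem_of_pow_mem 2 ?_
      rw [sq, tr_mul_self, show A * X * (A * X) = A * A * (X * X) by
        rw [mul_assoc, ← mul_assoc X, ← hAX, mul_assoc, mul_assoc],
        tr_mul_self_mul, dets_mul]
      exact add_mem (sub_mem (Ideal.mul_mem_right _ _ ht) (Ideal.mul_mem_right _ _ hd))
        (Ideal.mul_mem_left _ _ (Ideal.mul_mem_right _ _ hd))
    rw [isUnit_iff_isUnit_dets, dets_one_add, add_assoc, dets_mul, ← sub_neg_eq_add]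
    refine isUnit_one_sub_self_of_mem_nonunits _ (neg_mem_iff.mpr ?_ : _ ∈ maximalIdeal R)
    exact add_mem htr (Ideal.mul_mem_right _ _ hd)

lemma isQuasipolar_of_not_isUnit {A : GenMatrix R s} (ht : ¬IsUnit (tr A))
    (hd : ¬IsUnit (dets A)) : IsQuasipolar A :=
  IsQuasinilpotent.isQuasipolar (isQuasinilpotent_iff.mpr ⟨ht, hd⟩)

lemma isQuasipolar_of_root {A : GenMatrix R s} (ht : IsUnit (tr A)) {α : R} (hα : ¬IsUnit α)
    (hroot : α * α - tr A * α + dets A = 0) : IsQuasipolar A := by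
  have hroot' : α * α - (A.a + A.d) * α + (A.a * A.d - s * (A.b * A.c)) = 0 := hroot
  have hβ : IsUnit (tr A - α) := isUnit_sub_of_not_isUnit ht hα
  obtain ⟨w, hw⟩ := (isUnit_sub_of_not_isUnit hβ hα).exists_right_inv
  set Q : GenMatrix R s := scalar (tr A - α) - A with hQ
  have hQQ : Q * Q = scalar (tr A - α - α) * Q := by
    ext <;> simp [hQ, tr] <;>
      first | ring1 | linear_combination hroot' | linear_combination -hroot'
  have hAQ : A * Q = scalar α * Q := by
    ext <;> simp [hQ, tr] <;>
      first | ring1 | linear_combination hroot'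
  have hdQ : dets Q = 0 := by simp [hQ, dets, tr]; linear_combination hroot'
  set q : GenMatrix R s := scalar w * Q with hq
  have hqq : IsIdempotentElem q := by
    rw [IsIdempotentElem, hq, mul_assoc, ← mul_assoc Q, ← scalar_mul_comm, mul_assoc, hQQ,
      ← mul_assoc, ← mul_assoc, ← map_mul, ← map_mul,
      show w * w * (tr A - α - α) = w by linear_combination w * hw]
  have hAq : A * q = scalar α * q := by
    rw [hq, ← mul_assoc, ← scalar_mul_comm, mul_assoc, hAQ, ← mul_assoc, ← mul_assoc,
      ← map_mul, ← map_mul, mul_comm]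
  have htq : tr q = 1 := by
    rw [hq, tr_scalar_mul, hQ, tr_sub, tr]; simp only [scalar_a, scalar_d]
    linear_combination hw
  have htAq : tr (A * q) = α := by rw [hAq, tr_scalar_mul, htq, mul_one]
  have hdq : dets q = 0 := by rw [hq, dets_mul, hdQ, mul_zero]
  refine ⟨q, hqq, fun y hy => ?_, ?_, ?_⟩
  · have hQy : Q * y = y * Q := by rw [hQ, sub_mul, mul_sub, scalar_mul_comm, hy]
    rw [hq, mul_assoc, hQy, ← mul_assoc, scalar_mul_comm, mul_assoc]
  · rw [isUnit_iff_isUnit_dets, dets_add, hdq, htq, htAq,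
      show dets A + 0 + (tr A * 1 - α) = (tr A - α) * (1 - -α) by linear_combination hroot]
    exact hβ.mul (isUnit_sub_of_not_isUnit isUnit_one ((IsUnit.neg_iff α).not.mpr hα))
  · refine isQuasinilpotent_iff.mpr ⟨htAq ▸ hα, ?_⟩
    rw [dets_mul, hdq, mul_zero]
    exact not_isUnit_zero

lemma eq_one_or_dets_eq_zero_of_isIdempotentElem {e : GenMatrix R s} (he : IsIdempotentElem e) :
    e = 1 ∨ dets e = 0 := by
  have hde : IsIdempotentElem (dets e) := by rw [IsIdempotentElem, ← dets_mul, he]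
  rcases eq_zero_or_eq_one_of_isIdempotentElem hde with h | h
  · exact .inr h
  · exact .inl ((IsIdempotentElem.iff_eq_one_of_isUnit
      (isUnit_iff_isUnit_dets.mpr (h ▸ isUnit_one))).mp he)

lemma eq_zero_or_eq_one_or_of_isIdempotentElem {p : GenMatrix R s} (hp : IsIdempotentElem p) :
    p = 0 ∨ p = 1 ∨ (dets p = 0 ∧ tr p = 1) := by
  rcases eq_one_or_dets_eq_zero_of_isIdempotentElem hp with rfl | hp0
  · exact .inr (.inl rfl)
  rcases eq_one_or_dets_eq_zero_of_isIdempotentElem hp.one_sub with hp1 | hp1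
  · exact .inl (sub_eq_self.mp hp1)
  · refine .inr (.inr ⟨hp0, ?_⟩)
    linear_combination hp0 - hp1 + dets_one_sub p

lemma exists_root_of_isQuasipolar {A : GenMatrix R s} (hA : IsQuasipolar A)
    (ht : IsUnit (tr A)) (hd : ¬IsUnit (dets A)) :
    ∃ α : R, ¬IsUnit α ∧ α * α - tr A * α + dets A = 0 := by
  obtain ⟨p, hp, hcomm, hunit, hqn⟩ := hA
  rcases eq_zero_or_eq_one_or_of_isIdempotentElem hp with rfl | rfl | ⟨hdp, htp⟩
  · exact absurd (isUnit_iff_isUnit_dets.mp (by simpa using hunit)) hd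
  · exact absurd ht (isQuasinilpotent_iff.mp (by simpa using hqn)).1
  refine ⟨tr (A * p), (isQuasinilpotent_iff.mp hqn).1, ?_⟩
  have hsplit : A * p + A * (1 - p) = A := by rw [mul_sub, mul_one, add_sub_cancel]
  have horth : A * p * (A * (1 - p)) = 0 := by
    rw [mul_assoc, ← mul_assoc p, hcomm A rfl, mul_assoc, hp.mul_one_sub_self, mul_zero,
      mul_zero]
  have hdets := dets_add (A * p) (A * (1 - p))
  rw [hsplit, horth, dets_mul, dets_mul, dets_one_sub, hdp, htp, mul_sub, mul_one, tr_sub,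
    show tr (0 : GenMatrix R s) = 0 by simp [tr]] at hdets
  linear_combination hdets

lemma isQuasipolarRing_iff_hasNonunitCharRoots :
    IsQuasipolarRing (GenMatrix R s) ↔ HasNonunitCharRoots R s := by
  refine ⟨fun h A ht hd => exists_root_of_isQuasipolar (h A) ht hd, fun h A => ?_⟩
  by_cases hd : IsUnit (dets A)
  · exact IsUnit.isQuasipolar (isUnit_iff_isUnit_dets.mpr hd)
  by_cases ht : IsUnit (tr A)
  · obtain ⟨α, hα, hroot⟩ := h A ht hd
    exact isQuasipolar_of_root ht hα hroot
  · exact isQuasipolar_of_not_isUnit ht hd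

end IsLocalRing

open IsLocalRing PowerSeries

lemma hasNonunitCharRoots_powerSeries_iff {R : Type*} [CommRing R] [IsLocalRing R]
    {s : PowerSeries R} :
    HasNonunitCharRoots (PowerSeries R) s ↔ HasNonunitCharRoots R (constantCoeff s) := by
  constructor
  · intro h A₀ ht hd
    set A : GenMatrix (PowerSeries R) s := map C A₀
    have hA : map constantCoeff A = A₀ := by ext <;> simp [A, map]
    have htr : constantCoeff (tr A) = tr A₀ := by rw [← tr_map, hA]
    have hdets : constantCoeff (dets A) = dets A₀ := by rw [← dets_map, hA]
    obtain ⟨α, hα, hroot⟩ := h A (isUnit_iff_constantCoeff.mpr (htr ▸ ht))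
      (fun hu => hd (hdets ▸ hu.map constantCoeff))
    refine ⟨constantCoeff α, fun hu => hα (isUnit_iff_constantCoeff.mpr hu), ?_⟩
    simpa [htr, hdets] using congrArg constantCoeff hroot
  · intro h A ht hd
    have ht₀ := isUnit_iff_constantCoeff.mp ht
    obtain ⟨α₀, hα₀, hroot₀⟩ := h (map constantCoeff A) (by rwa [tr_map])
      (by rwa [dets_map, ← isUnit_iff_constantCoeff])
    rw [tr_map, dets_map] at hroot₀
    obtain ⟨α, hroot, hα⟩ := exists_root_quadratic_of_constantCoeff hroot₀ (by
      rw [← IsUnit.neg_iff, neg_sub, two_mul, ← sub_sub]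
      exact isUnit_sub_of_not_isUnit (isUnit_sub_of_not_isUnit ht₀ hα₀) hα₀)
    exact ⟨α, fun hu => hα₀ (hα ▸ isUnit_iff_constantCoeff.mp hu), hroot⟩

end GenMatrix

/-- for a commutative local ring `R` and `s ∈ R[[x]]`, `K_s(R[[x]])` is
quasipolar iff `K_{s₀}(R)` is quasipolar, where `s₀` is the constant term of `s`. -/
theorem genMatrix_powerSeries_isQuasipolarRing_iff {R : Type*} [CommRing R] [IsLocalRing R]
    (s : PowerSeries R) :
    IsQuasipolarRing (GenMatrix (PowerSeries R) s) ↔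
      IsQuasipolarRing (GenMatrix R (PowerSeries.constantCoeff (R := R) s)) := by
  rw [GenMatrix.isQuasipolarRing_iff_hasNonunitCharRoots,
    GenMatrix.isQuasipolarRing_iff_hasNonunitCharRoots]
  exact GenMatrix.hasNonunitCharRoots_powerSeries_iff
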